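/- arXiv:2202.13382 — 2 statements merged into one kernel-verified Lean document; each statement's English description precedes it below -/
import Mathlib

section
/- Let u : ℝ^n × [0,T] → ℝ be bounded and upper semicontinuous and v : ℝ^n × [0,T] → ℝ be bounded and lower semicontinuous, and suppose there exists δ > 0 with sup_{(x,t) ∈ ℝ^n × [0,T)} (u(x,t) − v(x,t)) − δ > M_b, where M_b := sup_{x ∈ ℝ^n} max(u(x,0) − v(x,0), 0). Then there exist η > 0, β₀ > 0 and ρ₀ > 0 such that for every α > 0, every β ∈ (0,β₀) and every ρ ∈ (0,ρ₀): sup_{(x,y,t) ∈ ℝ^n × ℝ^n × [0,T)} M_{α,ρ,β}(x,y,t) > η. -/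
/-! Pick `(x₀, t₀)` with `u - v > δ` there, which exists since that supremum exceeds
`M_b + δ ≥ δ`. At `x = y = x₀`, `t = t₀` the term `α‖x - y‖²` vanishes, and `ρ/(T - t₀)`,
`β‖x₀‖²` are each below `δ/4` once `ρ` and `β` are small, so `M_{α,ρ,β}` exceeds `δ/2`
there for every `α`. Boundedness of `u` and `v` makes the supremum of `M_{α,ρ,β}` finite. -/

open scoped RealInnerProductSpace Matrix
open Set

noncomputable section

abbrev Evec (n : ℕ) := EuclideanSpace ℝ (Fin n)

/-- The quadratic form `v ↦ vᵀ X v` associated to an `n × n` real matrix. -/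
def quadForm {n : ℕ} (X : Matrix (Fin n) (Fin n) ℝ) (v : Evec n) : ℝ :=
  ∑ i, ∑ j, v i * X i j * v j

/-- Frobenius norm of a real matrix. -/
def frobNorm {n m : ℕ} (A : Matrix (Fin n) (Fin m) ℝ) : ℝ :=
  Real.sqrt (∑ i, ∑ j, (A i j) ^ 2)

/-- The operator `L(M, p, x) = (1/2) Tr(σ(x) σ(x)ᵀ M) + b(x) · p`. -/
def opL {n m : ℕ} (b : Evec n → Evec n) (σ : Evec n → Matrix (Fin n) (Fin m) ℝ)
    (X : Matrix (Fin n) (Fin n) ℝ) (p x : Evec n) : ℝ :=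
  (1 / 2) * Matrix.trace (σ x * (σ x)ᵀ * X) + ⟪b x, p⟫

/-- `(a, p, X)` belongs to the parabolic superjet `P^{2,+} w (x,t)` relative to the
domain `U × (0,T)`. -/
def InSuperJet {n : ℕ} (T : ℝ) (U : Set (Evec n)) (w : Evec n → ℝ → ℝ)
    (x : Evec n) (t a : ℝ) (p : Evec n) (X : Matrix (Fin n) (Fin n) ℝ) : Prop :=
  ∀ η > (0 : ℝ), ∃ δ > (0 : ℝ), ∀ y ∈ U, ∀ s ∈ Set.Ioo (0 : ℝ) T,
    ‖y - x‖ + |s - t| < δ →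
    w y s ≤ w x t + a * (s - t) + ⟪p, y - x⟫ + (1 / 2) * quadForm X (y - x)
      + η * (|s - t| + ‖y - x‖ ^ 2)

/-- `(a, p, X)` belongs to the parabolic subjet `P^{2,-} w (x,t) = -P^{2,+}(-w)(x,t)`. -/
def InSubJet {n : ℕ} (T : ℝ) (U : Set (Evec n)) (w : Evec n → ℝ → ℝ)
    (x : Evec n) (t a : ℝ) (p : Evec n) (X : Matrix (Fin n) (Fin n) ℝ) : Prop :=
  InSuperJet T U (fun y s => -(w y s)) x t (-a) (-p) (-X)

/-- Jet inequality of a viscosity subsolution of `∂_t u - L(D²u, Du, x) = 0` on `U × (0,T)`. -/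
def SubsolutionPropOn {n m : ℕ} (b : Evec n → Evec n) (σ : Evec n → Matrix (Fin n) (Fin m) ℝ)
    (T : ℝ) (U : Set (Evec n)) (u : Evec n → ℝ → ℝ) : Prop :=
  ∀ x ∈ U, ∀ t ∈ Set.Ioo (0 : ℝ) T, ∀ (a : ℝ) (p : Evec n) (X : Matrix (Fin n) (Fin n) ℝ),
    X.IsSymm → InSuperJet T U u x t a p X → a - opL b σ X p x ≤ 0

/-- Jet inequality of a viscosity supersolution of `∂_t u - L(D²u, Du, x) = 0` on `U × (0,T)`. -/
def SupersolutionPropOn {n m : ℕ} (b : Evec n → Evec n) (σ : Evec n → Matrix (Fin n) (Fin m) ℝ)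
    (T : ℝ) (U : Set (Evec n)) (u : Evec n → ℝ → ℝ) : Prop :=
  ∀ x ∈ U, ∀ t ∈ Set.Ioo (0 : ℝ) T, ∀ (a : ℝ) (p : Evec n) (X : Matrix (Fin n) (Fin n) ℝ),
    X.IsSymm → InSubJet T U u x t a p X → 0 ≤ a - opL b σ X p x

/-- The set `L_{b,σ}` of points around which `(b, σ)` is locally Lipschitz. -/
def Lset {n m : ℕ} (b : Evec n → Evec n) (σ : Evec n → Matrix (Fin n) (Fin m) ℝ) :
    Set (Evec n) :=
  {x | ∃ U ∈ nhds x, ∃ K ≥ (0 : ℝ), ∀ y ∈ U, ∀ z ∈ U,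
    ‖b y - b z‖ + frobNorm (σ y - σ z) ≤ K * ‖y - z‖}

/-- The complement `NL_{b,σ}` of `L_{b,σ}`. -/
def NLset {n m : ℕ} (b : Evec n → Evec n) (σ : Evec n → Matrix (Fin n) (Fin m) ℝ) :
    Set (Evec n) :=
  (Lset b σ)ᶜ

/-- Assumption Z on the coefficients `b`, `σ`. -/
structure AssumptionZ {n m : ℕ} (b : Evec n → Evec n) (σ : Evec n → Matrix (Fin n) (Fin m) ℝ)
    (Cb Cσ α β : ℝ) : Prop where
  hCb : 0 < Cb
  hCσ : 0 < Cσ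
  hα : α ∈ Set.Ioc (0 : ℝ) 1
  hβ : β ∈ Set.Ioc (0 : ℝ) 1
  hb_bdd : ∃ C, ∀ x, ‖b x‖ ≤ C
  hσ_bdd : ∃ C, ∀ x, frobNorm (σ x) ≤ C
  hb_hold : ∀ x y, ‖b x - b y‖ ≤ Cb * ‖x - y‖ ^ α
  hσ_hold : ∀ x y, frobNorm (σ x - σ y) ≤ Cσ * ‖x - y‖ ^ β
  hNL : ∀ x ∈ NLset b σ, b x = 0 ∧ σ x = 0 ∧ ∃ r > (0 : ℝ),
    ∀ y ∈ Metric.ball x r ∩ Lset b σ, ∀ v : Evec n,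
      Cσ⁻¹ * ‖x - y‖ ^ (2 * β) * ‖v‖ ^ 2 ≤ quadForm (σ y * (σ y)ᵀ) v ∧
      quadForm (σ y * (σ y)ᵀ) v ≤ Cσ * ‖x - y‖ ^ (2 * β) * ‖v‖ ^ 2
  hexp : 1 + α - 2 * β > 0
  hβ_half : β > 1 / 2

/-- Assumption P on the approximating coefficients `bε`, `σε`. -/
structure AssumptionP {n m : ℕ} (b : Evec n → Evec n) (σ : Evec n → Matrix (Fin n) (Fin m) ℝ)
    (bε : ℝ → Evec n → Evec n) (σε : ℝ → Evec n → Matrix (Fin n) (Fin m) ℝ) : Prop where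
  hb_cont : Continuous b
  hσ_cont : ∀ i j, Continuous fun x => σ x i j
  hb_bdd : ∃ C, ∀ x, ‖b x‖ ≤ C
  hσ_bdd : ∃ C, ∀ x, frobNorm (σ x) ≤ C
  hbε_cont : ∀ ε > (0 : ℝ), Continuous (bε ε)
  hσε_cont : ∀ ε > (0 : ℝ), ∀ i j, Continuous fun x => σε ε x i j
  hbε_bdd : ∀ ε > (0 : ℝ), ∃ C, ∀ x, ‖bε ε x‖ ≤ C
  hσε_bdd : ∀ ε > (0 : ℝ), ∃ C, ∀ x, frobNorm (σε ε x) ≤ C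
  hposdef : ∀ ε > (0 : ℝ), ∀ x, (σε ε x * (σε ε x)ᵀ).PosDef
  hconv_b : ∀ K : Set (Evec n), IsCompact K → ∀ η > (0 : ℝ), ∃ ε₀ > (0 : ℝ),
    ∀ ε, 0 < ε → ε < ε₀ → ∀ x ∈ K, ‖bε ε x - b x‖ < η
  hconv_σ : ∀ K : Set (Evec n), IsCompact K → ∀ η > (0 : ℝ), ∃ ε₀ > (0 : ℝ),
    ∀ ε, 0 < ε → ε < ε₀ → ∀ x ∈ K, frobNorm (σε ε x - σ x) < η

/-- The upper relaxed half-limit `u*` of a family `(u^ε)_{ε>0}` on `ℝ^n × [0,T)`. -/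
def relaxSup {n : ℕ} (T : ℝ) (u : ℝ → Evec n → ℝ → ℝ) (x : Evec n) (t : ℝ) : ℝ :=
  ⨅ δ : {d : ℝ // 0 < d}, sSup {r : ℝ | ∃ ε, 0 < ε ∧ ε < δ.1 ∧ ∃ y : Evec n, ∃ s : ℝ,
    0 ≤ s ∧ s < T ∧ ‖x - y‖ + |t - s| < δ.1 ∧ u ε y s = r}

/-- The lower relaxed half-limit `u_*` of a family `(u^ε)_{ε>0}` on `ℝ^n × [0,T)`. -/
def relaxInf {n : ℕ} (T : ℝ) (u : ℝ → Evec n → ℝ → ℝ) (x : Evec n) (t : ℝ) : ℝ :=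
  ⨆ δ : {d : ℝ // 0 < d}, sInf {r : ℝ | ∃ ε, 0 < ε ∧ ε < δ.1 ∧ ∃ y : Evec n, ∃ s : ℝ,
    0 ≤ s ∧ s < T ∧ ‖x - y‖ + |t - s| < δ.1 ∧ u ε y s = r}


/-- The auxiliary function `M_{α,ρ,β}(x,y,t) = u(x,t) - ρ/(T-t) - v(y,t) - α‖x-y‖² - β‖x‖²`. -/
def Maux {n : ℕ} (T α ρ β : ℝ) (u v : Evec n → ℝ → ℝ) (x y : Evec n) (t : ℝ) : ℝ :=
  u x t - ρ / (T - t) - v y t - α * ‖x - y‖ ^ 2 - β * ‖x‖ ^ 2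

/-- `M_b = sup_x max(u(x,0) - v(x,0), 0)`. -/
def MbVal {n : ℕ} (u v : Evec n → ℝ → ℝ) : ℝ :=
  ⨆ x : Evec n, max (u x 0 - v x 0) 0

namespace Real

/-- No nonemptiness or boundedness is assumed: in those degenerate cases `sSup s = 0 ≤ a`. -/
theorem exists_mem_lt_of_lt_sSup {s : Set ℝ} {a : ℝ} (ha : 0 ≤ a) (h : a < sSup s) :
    ∃ x ∈ s, a < x := by
  by_contra! hs
  exact (Real.sSup_le hs ha).not_gt h

end Real

section Maux

variable {n : ℕ} {T α ρ β : ℝ} {u v : Evec n → ℝ → ℝ}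

theorem MbVal_nonneg (u v : Evec n → ℝ → ℝ) : 0 ≤ MbVal u v :=
  Real.iSup_nonneg fun _ => le_max_right _ _

theorem Maux_le {Cu Cv : ℝ} {x y : Evec n} {t : ℝ} (hα : 0 ≤ α) (hρ : 0 ≤ ρ) (hβ : 0 ≤ β)
    (ht : t < T) (hu : u x t ≤ Cu) (hv : -Cv ≤ v y t) :
    Maux T α ρ β u v x y t ≤ Cu + Cv := by
  have : 0 ≤ ρ / (T - t) := div_nonneg hρ (sub_nonneg.2 ht.le)
  unfold Maux
  linarith [mul_nonneg hα (sq_nonneg ‖x - y‖), mul_nonneg hβ (sq_nonneg ‖x‖)]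

theorem bddAbove_Maux {Cu Cv : ℝ} (hu : ∀ x t, 0 ≤ t → t ≤ T → |u x t| ≤ Cu)
    (hv : ∀ x t, 0 ≤ t → t ≤ T → |v x t| ≤ Cv) (hα : 0 ≤ α) (hρ : 0 ≤ ρ) (hβ : 0 ≤ β) :
    BddAbove {r : ℝ | ∃ (x y : Evec n) (t : ℝ), 0 ≤ t ∧ t < T ∧
      r = Maux T α ρ β u v x y t} := by
  refine ⟨Cu + Cv, ?_⟩
  rintro _ ⟨x, y, t, ht₀, htT, rfl⟩
  exact Maux_le hα hρ hβ htT (abs_le.1 (hu x t ht₀ htT.le)).2 (abs_le.1 (hv y t ht₀ htT.le)).1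

theorem sub_lt_Maux_self {c t : ℝ} {x : Evec n} (ht : t < T) (hβ : 0 ≤ β)
    (hρ : ρ < c * (T - t)) (hβc : β < c / (‖x‖ ^ 2 + 1)) :
    u x t - v x t - 2 * c < Maux T α ρ β u v x x t := by
  have hρc : ρ / (T - t) < c := (div_lt_iff₀ (sub_pos.2 ht)).2 hρ
  have hβx : β * (‖x‖ ^ 2 + 1) < c := (lt_div_iff₀ (by positivity)).1 hβc
  simp only [Maux, sub_self, norm_zero]
  linarith [mul_add β (‖x‖ ^ 2) 1]

end Maux

theorem aux_function_sup_positive_general {n : ℕ} (T : ℝ)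
    (u v : Evec n → ℝ → ℝ)
    (hu_bdd : ∃ C, ∀ x t, 0 ≤ t → t ≤ T → |u x t| ≤ C)
    (hv_bdd : ∃ C, ∀ x t, 0 ≤ t → t ≤ T → |v x t| ≤ C)
    (hδ : ∃ δ > (0 : ℝ),
      sSup {r : ℝ | ∃ (x : Evec n) (t : ℝ), 0 ≤ t ∧ t < T ∧ r = u x t - v x t} - δ
        > MbVal u v) :
    ∃ η > (0 : ℝ), ∃ β₀ > (0 : ℝ), ∃ ρ₀ > (0 : ℝ), ∀ α > (0 : ℝ),
      ∀ β : ℝ, 0 < β → β < β₀ → ∀ ρ : ℝ, 0 < ρ → ρ < ρ₀ →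
        sSup {r : ℝ | ∃ (x y : Evec n) (t : ℝ), 0 ≤ t ∧ t < T ∧
          r = Maux T α ρ β u v x y t} > η := by
  obtain ⟨Cu, hCu⟩ := hu_bdd
  obtain ⟨Cv, hCv⟩ := hv_bdd
  obtain ⟨δ, hδ_pos, hgap⟩ := hδ
  obtain ⟨_, ⟨x₀, t₀, ht₀, ht₀T, rfl⟩, hx₀⟩ :=
    Real.exists_mem_lt_of_lt_sSup hδ_pos.le (by linarith [MbVal_nonneg u v])
  refine ⟨δ / 2, by positivity, δ / 4 / (‖x₀‖ ^ 2 + 1), by positivity,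
    δ / 4 * (T - t₀), mul_pos (by positivity) (sub_pos.2 ht₀T),
    fun α hα β hβ hβ₀ ρ hρ hρ₀ => ?_⟩
  have hdiag := sub_lt_Maux_self (u := u) (v := v) (α := α) ht₀T hβ.le hρ₀ hβ₀
  exact lt_csSup_of_lt (bddAbove_Maux hCu hCv hα.le hρ.le hβ.le)
    ⟨x₀, x₀, t₀, ht₀, ht₀T, rfl⟩ (by linarith)

/-- the supremum of the auxiliary function is bounded away from zero,
for small `β`, `ρ`, uniformly in `α`. -/
theorem aux_function_sup_positive {n : ℕ} (T : ℝ) (hT : 0 < T)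
    (u v : Evec n → ℝ → ℝ)
    (hu_bdd : ∃ C, ∀ x t, 0 ≤ t → t ≤ T → |u x t| ≤ C)
    (hv_bdd : ∃ C, ∀ x t, 0 ≤ t → t ≤ T → |v x t| ≤ C)
    (hu_usc : UpperSemicontinuousOn (Function.uncurry u) (Set.univ ×ˢ Set.Icc 0 T))
    (hv_lsc : LowerSemicontinuousOn (Function.uncurry v) (Set.univ ×ˢ Set.Icc 0 T))
    (hδ : ∃ δ > (0 : ℝ),
      sSup {r : ℝ | ∃ (x : Evec n) (t : ℝ), 0 ≤ t ∧ t < T ∧ r = u x t - v x t} - δ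
        > MbVal u v) :
    ∃ η > (0 : ℝ), ∃ β₀ > (0 : ℝ), ∃ ρ₀ > (0 : ℝ), ∀ α > (0 : ℝ),
      ∀ β : ℝ, 0 < β → β < β₀ → ∀ ρ : ℝ, 0 < ρ → ρ < ρ₀ →
        sSup {r : ℝ | ∃ (x y : Evec n) (t : ℝ), 0 ≤ t ∧ t < T ∧
          r = Maux T α ρ β u v x y t} > η :=
  aux_function_sup_positive_general T u v hu_bdd hv_bdd hδ

end
end

section
/- Let u : ℝ^n × [0,T] → ℝ be bounded and upper semicontinuous and v : ℝ^n × [0,T] → ℝ be bounded and lower semicontinuous, and suppose there exists δ > 0 with sup_{(x,t) ∈ ℝ^n × [0,T)} (u(x,t) − v(x,t)) − δ > M_b, where M_b := sup_{x ∈ ℝ^n} max(u(x,0) − v(x,0), 0). For each α, β, ρ > 0 let (x̂(α,β,ρ), ŷ(α,β,ρ), t̂(α,β,ρ)) be any maximizer of M_{α,ρ,β} over ℝ^n × ℝ^n × [0,T). Then lim_{α→∞} limsup_{(β,ρ)→(0,0)} α·‖x̂(α,β,ρ) − ŷ(α,β,ρ)‖² = 0. -/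
/-! Write `m(α, β, ρ)` for the maximal value of `M_{α,ρ,β}`. Evaluating `M_{α',ρ',β'}` at a
maximizer of `M_{α,ρ,β}` shows that `m` is nonincreasing in each parameter and that
`(α/2)‖x̂ - ŷ‖² ≤ m(α/2, β, ρ) - m(α, β, ρ)`. The supremum `N(α)` of `m(α, ·, ·)` over `β, ρ > 0`
is also its limit as `(β, ρ) → (0, 0)`, so the limsup is at most `2(N(α/2) - N(α))`. Since `u`
and `v` are bounded, `N` is finite, antitone and bounded below, hence convergent as `α → ∞`, and
this gap tends to `0`. -/

open scoped RealInnerProductSpace Matrix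
open Set

noncomputable section

open Filter Topology

lemma AntitoneOn.exists_tendsto_atTop {α β : Type*} [LinearOrder α]
    [ConditionallyCompleteLinearOrder β] [TopologicalSpace β] [OrderTopology β]
    {f : α → β} {a : α} (hf : AntitoneOn f (Ici a)) (hbdd : BddBelow (f '' Ici a)) :
    ∃ L, Tendsto f atTop (𝓝 L) := by
  have hg : Antitone fun x => f (max x a) := fun x y hxy =>
    hf (le_max_right x a) (le_max_right y a) (max_le_max_right a hxy)
  have hg_bdd : BddBelow (range fun x => f (max x a)) :=
    hbdd.mono (range_subset_iff.2 fun x => mem_image_of_mem f (le_max_right x a))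
  refine ⟨_, (tendsto_atTop_ciInf hg hg_bdd).congr' ?_⟩
  filter_upwards [eventually_ge_atTop a] with x hx
  rw [max_eq_left hx]

lemma limsup_mem_Icc_of_forall_pos_eventually_le {ι : Type*} {l : Filter ι} [l.NeBot]
    {f : ι → ℝ} {a c : ℝ} (ha : ∀ᶠ i in l, a ≤ f i) (hc : ∀ ε > 0, ∀ᶠ i in l, f i ≤ c + ε) :
    limsup f l ∈ Icc a c := by
  have hcobdd : l.IsCoboundedUnder (· ≤ ·) f := isCoboundedUnder_le_of_eventually_le l ha
  refine ⟨le_limsup_of_frequently_le ha.frequently ⟨c + 1, hc 1 one_pos⟩, ?_⟩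
  exact le_of_forall_pos_le_add fun ε hε => limsup_le_of_le hcobdd (hc ε hε)

lemma eventually_mem_quadrant_le {q₁ : ℝ × ℝ} (hq₁ : q₁ ∈ Ioi 0 ×ˢ Ioi 0) :
    ∀ᶠ q in 𝓝[>] 0 ×ˢ 𝓝[>] 0, q ∈ Ioi 0 ×ˢ Ioi 0 ∧ q ≤ q₁ := by
  filter_upwards [prod_mem_prod (Ioo_mem_nhdsGT hq₁.1) (Ioo_mem_nhdsGT hq₁.2)] with q hq
  exact ⟨⟨hq.1.1, hq.2.1⟩, hq.1.2.le, hq.2.2.le⟩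

def quadrantSup (f : ℝ × ℝ → ℝ) : ℝ :=
  sSup (f '' Ioi 0 ×ˢ Ioi 0)

lemma le_quadrantSup {f : ℝ × ℝ → ℝ} (hf : BddAbove (f '' Ioi 0 ×ˢ Ioi 0)) {q : ℝ × ℝ}
    (hq : q ∈ Ioi 0 ×ˢ Ioi 0) : f q ≤ quadrantSup f :=
  le_csSup hf (mem_image_of_mem f hq)

lemma quadrantSup_le_quadrantSup {f g : ℝ × ℝ → ℝ} (hg : BddAbove (g '' Ioi 0 ×ˢ Ioi 0))
    (h : ∀ q ∈ Ioi 0 ×ˢ Ioi 0, f q ≤ g q) : quadrantSup f ≤ quadrantSup g :=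
  csSup_le ((nonempty_Ioi.prod nonempty_Ioi).image f) <| by
    rintro _ ⟨q, hq, rfl⟩
    exact (h q hq).trans (le_quadrantSup hg hq)

/-- Holds when `m α q` is the maximal value of `F - α • P - q.1 • P₁ - q.2 • P₂` with `P₁, P₂ ≥ 0`
and `D α q` is `P` at a maximizer: evaluate the `(α', q')`-problem at that maximizer. -/
def IsPenalizedValue (m D : ℝ → ℝ × ℝ → ℝ) : Prop :=
  ∀ α' α, 0 < α' → α' ≤ α → ∀ q' ∈ Ioi 0 ×ˢ Ioi 0, ∀ q ∈ Ioi 0 ×ˢ Ioi 0, q' ≤ q →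
    m α q + (α - α') * D α q ≤ m α' q'

section Penalization

variable {m D : ℝ → ℝ × ℝ → ℝ}

lemma antitoneOn_quadrantSup (hD : ∀ α q, 0 ≤ D α q)
    (hm : IsPenalizedValue m D)
    (hbdd : ∀ α > 0, BddAbove (m α '' Ioi 0 ×ˢ Ioi 0)) :
    AntitoneOn (fun α => quadrantSup (m α)) (Ioi 0) := by
  intro α' hα' α _ hαα'
  refine quadrantSup_le_quadrantSup (hbdd α' hα') fun q hq => ?_
  have := hm α' α hα' hαα' q hq q hq le_rfl
  have := mul_nonneg (sub_nonneg.2 hαα') (hD α q)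
  linarith

lemma tendsto_quadrantSup_half_sub (hD : ∀ α q, 0 ≤ D α q)
    (hm : IsPenalizedValue m D)
    (hbdd : ∀ α > 0, BddAbove (m α '' Ioi 0 ×ˢ Ioi 0))
    (hlow : ∃ L, ∀ α > 0, ∃ q ∈ Ioi 0 ×ˢ Ioi 0, L ≤ m α q) :
    Tendsto (fun α => quadrantSup (m (α / 2)) - quadrantSup (m α)) atTop (𝓝 0) := by
  obtain ⟨L, hL⟩ := hlow
  have hanti : AntitoneOn (fun α => quadrantSup (m α)) (Ici 1) :=
    (antitoneOn_quadrantSup hD hm hbdd).mono fun _ hα => mem_Ioi.2 (zero_lt_one.trans_le hα)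
  have hbelow : BddBelow ((fun α => quadrantSup (m α)) '' Ici 1) := by
    refine ⟨L, ?_⟩
    rintro _ ⟨α, hα, rfl⟩
    obtain ⟨q, hq, hLq⟩ := hL α (zero_lt_one.trans_le hα)
    exact hLq.trans (le_quadrantSup (hbdd α (zero_lt_one.trans_le hα)) hq)
  obtain ⟨N, hN⟩ := hanti.exists_tendsto_atTop hbelow
  simpa using (hN.comp (tendsto_id.atTop_div_const two_pos)).sub hN

lemma eventually_mul_le_quadrantSup_gap
    (hm : IsPenalizedValue m D)
    (hbdd : ∀ α > 0, BddAbove (m α '' Ioi 0 ×ˢ Ioi 0)) {α ε : ℝ} (hα : 0 < α) (hε : 0 < ε) :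
    ∀ᶠ q in 𝓝[>] 0 ×ˢ 𝓝[>] 0,
      α * D α q ≤ 2 * (quadrantSup (m (α / 2)) - quadrantSup (m α)) + ε := by
  obtain ⟨_, ⟨q₁, hq₁, rfl⟩, hq₁_near⟩ :=
    exists_lt_of_lt_csSup ((nonempty_Ioi.prod nonempty_Ioi).image (m α))
      (sub_lt_self (quadrantSup (m α)) (half_pos hε))
  filter_upwards [eventually_mem_quadrant_le hq₁] with q ⟨hq, hqq₁⟩
  have hgap := hm (α / 2) α (half_pos hα) (half_le_self hα.le) q hq q hq le_rfl
  have hmono := hm α α hα le_rfl q hq q₁ hq₁ hqq₁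
  have hsup := le_quadrantSup (hbdd (α / 2) (half_pos hα)) hq
  rw [sub_self, zero_mul, add_zero] at hmono
  linarith

theorem tendsto_limsup_mul_penalty (hD : ∀ α q, 0 ≤ D α q)
    (hm : IsPenalizedValue m D)
    (hbdd : ∀ α > 0, BddAbove (m α '' Ioi 0 ×ˢ Ioi 0))
    (hlow : ∃ L, ∀ α > 0, ∃ q ∈ Ioi 0 ×ˢ Ioi 0, L ≤ m α q) :
    Tendsto (fun α => limsup (fun q => α * D α q) (𝓝[>] 0 ×ˢ 𝓝[>] 0)) atTop (𝓝 0) := by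
  have hgap := (tendsto_quadrantSup_half_sub hD hm hbdd hlow).const_mul 2
  rw [mul_zero] at hgap
  have hbounds : ∀ᶠ α in atTop, limsup (fun q => α * D α q) (𝓝[>] 0 ×ˢ 𝓝[>] 0) ∈
      Icc 0 (2 * (quadrantSup (m (α / 2)) - quadrantSup (m α))) := by
    filter_upwards [eventually_gt_atTop 0] with α hα
    exact limsup_mem_Icc_of_forall_pos_eventually_le
      (Eventually.of_forall fun q => mul_nonneg hα.le (hD α q))
      fun ε hε => eventually_mul_le_quadrantSup_gap hm hbdd hα hε
  exact tendsto_of_tendsto_of_tendsto_of_le_of_le' tendsto_const_nhds hgap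
    (hbounds.mono fun _ h => h.1) (hbounds.mono fun _ h => h.2)

end Penalization

lemma Maux_add_le_Maux {n : ℕ} {T α α' ρ ρ' β β' : ℝ} (u v : Evec n → ℝ → ℝ) (x y : Evec n)
    {t : ℝ} (ht : t < T) (hρ : ρ' ≤ ρ) (hβ : β' ≤ β) :
    Maux T α ρ β u v x y t + (α - α') * ‖x - y‖ ^ 2 ≤ Maux T α' ρ' β' u v x y t := by
  have hρT : ρ' / (T - t) ≤ ρ / (T - t) := div_le_div_of_nonneg_right hρ (sub_pos.2 ht).le
  have hβx : β' * ‖x‖ ^ 2 ≤ β * ‖x‖ ^ 2 := mul_le_mul_of_nonneg_right hβ (sq_nonneg _)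
  simp only [Maux]
  linarith

lemma Maux_le_sub {n : ℕ} {T α ρ β : ℝ} (u v : Evec n → ℝ → ℝ) (x y : Evec n) {t : ℝ}
    (ht : t < T) (hα : 0 ≤ α) (hρ : 0 ≤ ρ) (hβ : 0 ≤ β) :
    Maux T α ρ β u v x y t ≤ u x t - v y t := by
  have hρT : 0 ≤ ρ / (T - t) := div_nonneg hρ (sub_pos.2 ht).le
  have hαxy : 0 ≤ α * ‖x - y‖ ^ 2 := by positivity
  have hβx : 0 ≤ β * ‖x‖ ^ 2 := by positivity
  simp only [Maux]
  linarith

open Filter in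
theorem aux_maximizer_distance_limit_general {n : ℕ} (T : ℝ)
    (u v : Evec n → ℝ → ℝ)
    (hu_bdd : ∃ C, ∀ x t, 0 ≤ t → t ≤ T → |u x t| ≤ C)
    (hv_bdd : ∃ C, ∀ x t, 0 ≤ t → t ≤ T → |v x t| ≤ C)
    (xh yh : ℝ → ℝ → ℝ → Evec n) (th : ℝ → ℝ → ℝ → ℝ)
    (hmax : ∀ α > (0 : ℝ), ∀ β > (0 : ℝ), ∀ ρ > (0 : ℝ),
      (0 ≤ th α β ρ ∧ th α β ρ < T) ∧
      ∀ (x y : Evec n) (t : ℝ), 0 ≤ t → t < T →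
        Maux T α ρ β u v x y t ≤ Maux T α ρ β u v (xh α β ρ) (yh α β ρ) (th α β ρ)) :
    Tendsto
      (fun α : ℝ =>
        Filter.limsup
          (fun q : ℝ × ℝ => α * ‖xh α q.1 q.2 - yh α q.1 q.2‖ ^ 2)
          ((nhdsWithin 0 (Set.Ioi 0)) ×ˢ (nhdsWithin 0 (Set.Ioi 0))))
      atTop (nhds 0) := by
  obtain ⟨Cu, hCu⟩ := hu_bdd
  obtain ⟨Cv, hCv⟩ := hv_bdd
  refine tendsto_limsup_mul_penalty (D := fun α q => ‖xh α q.1 q.2 - yh α q.1 q.2‖ ^ 2)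
    (m := fun α q => Maux T α q.2 q.1 u v (xh α q.1 q.2) (yh α q.1 q.2) (th α q.1 q.2))
    (fun _ _ => sq_nonneg _) ?_ ?_ ?_
  · intro α' α hα' hα'α q' hq' q hq hq'q
    obtain ⟨⟨ht₀, htT⟩, -⟩ := hmax α (hα'.trans_le hα'α) q.1 hq.1 q.2 hq.2
    exact (Maux_add_le_Maux u v _ _ htT hq'q.2 hq'q.1).trans
      ((hmax α' hα' q'.1 hq'.1 q'.2 hq'.2).2 _ _ _ ht₀ htT)
  · intro α hα
    refine ⟨Cu + Cv, ?_⟩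
    rintro _ ⟨q, hq, rfl⟩
    obtain ⟨⟨ht₀, htT⟩, -⟩ := hmax α hα q.1 hq.1 q.2 hq.2
    have hu := (abs_le.1 (hCu (xh α q.1 q.2) _ ht₀ htT.le)).2
    have hv := (abs_le.1 (hCv (yh α q.1 q.2) _ ht₀ htT.le)).1
    have := Maux_le_sub u v (xh α q.1 q.2) (yh α q.1 q.2) htT hα.le hq.2.le hq.1.le
    linarith
  · obtain ⟨⟨ht₀, htT⟩, -⟩ := hmax 1 one_pos 1 one_pos 1 one_pos
    -- `M_{α,1,1}(0, 0, t)` does not depend on `α`.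
    refine ⟨Maux T 0 1 1 u v 0 0 (th 1 1 1), fun α hα =>
      ⟨(1, 1), mk_mem_prod (mem_Ioi.2 one_pos) (mem_Ioi.2 one_pos), ?_⟩⟩
    simpa [Maux] using (hmax α hα 1 one_pos 1 one_pos).2 0 0 _ ht₀ htT

open Filter in
/-- for maximizers `(x̂,ŷ,t̂)` of the auxiliary function,
`α‖x̂-ŷ‖² → 0` in the iterated limit `(β,ρ) → (0,0)` then `α → ∞`. -/
theorem aux_maximizer_distance_limit {n : ℕ} (T : ℝ) (hT : 0 < T)
    (u v : Evec n → ℝ → ℝ)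
    (hu_bdd : ∃ C, ∀ x t, 0 ≤ t → t ≤ T → |u x t| ≤ C)
    (hv_bdd : ∃ C, ∀ x t, 0 ≤ t → t ≤ T → |v x t| ≤ C)
    (hu_usc : UpperSemicontinuousOn (Function.uncurry u) (Set.univ ×ˢ Set.Icc 0 T))
    (hv_lsc : LowerSemicontinuousOn (Function.uncurry v) (Set.univ ×ˢ Set.Icc 0 T))
    (hδ : ∃ δ > (0 : ℝ),
      sSup {r : ℝ | ∃ (x : Evec n) (t : ℝ), 0 ≤ t ∧ t < T ∧ r = u x t - v x t} - δ
        > MbVal u v)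
    (xh yh : ℝ → ℝ → ℝ → Evec n) (th : ℝ → ℝ → ℝ → ℝ)
    (hmax : ∀ α > (0 : ℝ), ∀ β > (0 : ℝ), ∀ ρ > (0 : ℝ),
      (0 ≤ th α β ρ ∧ th α β ρ < T) ∧
      ∀ (x y : Evec n) (t : ℝ), 0 ≤ t → t < T →
        Maux T α ρ β u v x y t ≤ Maux T α ρ β u v (xh α β ρ) (yh α β ρ) (th α β ρ)) :
    Tendsto
      (fun α : ℝ =>
        Filter.limsup
          (fun q : ℝ × ℝ => α * ‖xh α q.1 q.2 - yh α q.1 q.2‖ ^ 2)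
          ((nhdsWithin 0 (Set.Ioi 0)) ×ˢ (nhdsWithin 0 (Set.Ioi 0))))
      atTop (nhds 0) :=
  aux_maximizer_distance_limit_general T u v hu_bdd hv_bdd xh yh th hmax

end
end
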